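/- arXiv:2408.16581 — 5 statements merged into one kernel-verified Lean document; each statement's English description precedes it below -/
import Mathlib

section
/- Let E, A, X be categories, and let v : E ⥤ A and u : E ⥤ X be functors admitting left adjoints v_L ⊣ v and u_L ⊣ u. If the pairing functor ⟨v, u⟩ : E ⥤ A × X admits a left adjoint L, then for every object A of A and X of X the object L(A, X) is a binary coproduct of v_L(A) and u_L(X) in E, with coproduct injections induced by the unit of the adjunction L ⊣ ⟨v, u⟩. -/
/-!
For every test object `T`, the adjunctions give bijections, natural in `T`,
`(L(a, x) ⟶ T) ≃ (a ⟶ v T) × (x ⟶ u T) ≃ (vL a ⟶ T) × (uL x ⟶ T)`,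
and the composite sends `f` to the pair of injections followed by `f`. Hence `L(a, x)`
has the universal property of the coproduct.
-/

open CategoryTheory CategoryTheory.Limits

universe v₁ v₂ v₃ u₁ u₂ u₃

namespace CategoryTheory

def Limits.BinaryCofan.isColimitOfHomEquiv {C : Type*} [Category C] {Y₁ Y₂ : C}
    (c : BinaryCofan Y₁ Y₂) (e : ∀ T : C, (c.pt ⟶ T) ≃ (Y₁ ⟶ T) × (Y₂ ⟶ T))
    (he : ∀ (T : C) (f : c.pt ⟶ T), e T f = (c.inl ≫ f, c.inr ≫ f)) : IsColimit c :=
  have desc_spec {T : C} (f : Y₁ ⟶ T) (g : Y₂ ⟶ T) :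
      (c.inl ≫ (e T).symm (f, g), c.inr ≫ (e T).symm (f, g)) = (f, g) := by
    rw [← he, Equiv.apply_symm_apply]
  BinaryCofan.IsColimit.mk c (fun f g => (e _).symm (f, g))
    (fun f g => (Prod.ext_iff.mp (desc_spec f g)).1)
    (fun f g => (Prod.ext_iff.mp (desc_spec f g)).2)
    (fun f g m hf hg => (e _).eq_symm_apply.mpr (by subst hf hg; exact he _ m))

theorem Adjunction.homEquiv_prod'_apply {E A X : Type*} [Category E] [Category A] [Category X]
    {v : E ⥤ A} {u : E ⥤ X} {L : A × X ⥤ E} (adj : L ⊣ v.prod' u) (p : A × X) {T : E}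
    (f : L.obj p ⟶ T) :
    adj.homEquiv p T f = ((adj.unit.app p).1 ≫ v.map f, (adj.unit.app p).2 ≫ u.map f) := by
  rw [Adjunction.homEquiv_unit]
  rfl

end CategoryTheory

/-- Given functors `v : E ⥤ A` and `u : E ⥤ X` with left adjoints
`vL ⊣ v` and `uL ⊣ u`, if the pairing `⟨v, u⟩ : E ⥤ A × X` admits a left adjoint `L`,
then for all objects `a : A`, `x : X` the object `L.obj (a, x)` is a binary coproduct of
`vL(a)` and `uL(x)`, the coproduct injections being induced by the unit of `L ⊣ ⟨v, u⟩`. -/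
theorem left_adjoint_of_pairing_is_coproduct
    {E : Type u₁} [Category.{v₁} E] {A : Type u₂} [Category.{v₂} A]
    {X : Type u₃} [Category.{v₃} X]
    (v : E ⥤ A) (u : E ⥤ X) (vL : A ⥤ E) (uL : X ⥤ E)
    (adjV : vL ⊣ v) (adjU : uL ⊣ u)
    (L : A × X ⥤ E) (adj : L ⊣ Functor.prod' v u) (a : A) (x : X) :
    Nonempty (IsColimit (BinaryCofan.mk
      ((adjV.homEquiv a (L.obj (a, x))).symm (adj.unit.app (a, x)).1)
      ((adjU.homEquiv x (L.obj (a, x))).symm (adj.unit.app (a, x)).2))) := by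
  refine ⟨BinaryCofan.isColimitOfHomEquiv _
    (fun T => (adj.homEquiv (a, x) T).trans
      ((adjV.homEquiv a T).symm.prodCongr (adjU.homEquiv x T).symm))
    fun T (f : L.obj (a, x) ⟶ T) => ?_⟩
  have hf := adj.homEquiv_prod'_apply (a, x) f
  exact Prod.ext
    ((congrArg (adjV.homEquiv a T).symm (congrArg Prod.fst hf)).trans
      (adjV.homEquiv_naturality_right_symm _ f))
    ((congrArg (adjU.homEquiv x T).symm (congrArg Prod.snd hf)).trans
      (adjU.homEquiv_naturality_right_symm _ f))
end

section
/- Let S and T be monads on a category C and let α : S ⟶ T be a morphism of monads. If the Eilenberg–Moore category of T has coequalizers of reflexive pairs, then the restriction functor α* : EM(T) ⥤ EM(S), sending a T-algebra (X, a : T(X) → X) to the S-algebra (X, a ∘ α_X) and acting as the identity on underlying morphisms, admits a left adjoint. -/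
open CategoryTheory CategoryTheory.Limits

universe v₁ u₁

/-- Let `S` and `T` be monads on a category `C` and `α : S ⟶ T` a morphism
of monads.  If the Eilenberg–Moore category of `T` has coequalizers of reflexive pairs, then
the restriction functor `α* : EM(T) ⥤ EM(S)` (sending a `T`-algebra `(X, a)` to the
`S`-algebra `(X, a ∘ α_X)` and acting as the identity on underlying morphisms) admits a left
adjoint. -/
theorem restriction_has_left_adjoint_of_reflexive_coequalizers
    {C : Type u₁} [Category.{v₁} C] (S T : Monad C) (α : S ⟶ T)
    [HasReflexiveCoequalizers T.Algebra] :
    ∃ L : S.Algebra ⥤ T.Algebra,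
      Nonempty (L ⊣ Monad.algebraFunctorOfMonadHom α) := by
  have h : (Monad.algebraFunctorOfMonadHom α ⋙ S.forget).IsRightAdjoint := by
    have : Monad.algebraFunctorOfMonadHom α ⋙ S.forget ≅ T.forget := Iso.refl _
    exact ((Monad.adj T).ofNatIsoRight this.symm).isRightAdjoint
  have := isRightAdjoint_triangle_lift_monadic (R := Monad.algebraFunctorOfMonadHom α) S.forget
  obtain ⟨L, ⟨adj⟩⟩ := this.exists_leftAdjoint
  exact ⟨L, ⟨adj⟩⟩
end

section
/- Let X be a category with pushouts and colimits of ℕ-indexed chains, let F, G : X ⥤ X be endofunctors such that G preserves colimits of ℕ-indexed chains, and let α : F ⟶ G be a natural transformation. Then the restriction functor α* : Alg(G) ⥤ Alg(F) admits a left adjoint. -/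
/-!
The free `G`-algebra on an `F`-algebra `(A, a)` is the colimit of a chain
`A = X₀ → X₁ → ⋯` (maps `xₙ = inc n`) carrying partial structure maps `ζₙ = act n : G Xₙ → Xₙ₊₁`.
The first step is the pushout of `a` and `α_A`, which makes `x₀ ∘ a = ζ₀ ∘ α_A`; each later step
is the pushout of `ζₙ` and `G xₙ`, which makes `xₙ₊₁ ∘ ζₙ = ζₙ₊₁ ∘ G xₙ`. Since `G` preserves the
colimit, the `ζₙ` assemble to a `G`-algebra structure on it. Every step being a pushout, a map of
`F`-algebras `A → α*B` extends uniquely along the chain to a map of `G`-algebras.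
-/

open CategoryTheory CategoryTheory.Limits CategoryTheory.Endofunctor

universe v₁ u₁

namespace CategoryTheory.Endofunctor.FreeAlgebra

variable {X : Type u₁} [Category.{v₁} X]

/-- `Xₙ`, `Xₙ₊₁`, `xₙ` and `ζₙ` are bundled together because `Xₙ₊₂` is built from all of them. -/
structure Stage (G : X ⥤ X) where
  src : X
  tgt : X
  inc : src ⟶ tgt
  act : G.obj src ⟶ tgt

variable [HasPushouts X] {F G : X ⥤ X} (α : F ⟶ G) (A : Algebra F)

noncomputable def stage : ℕ → Stage G
  | 0 => ⟨A.a, pushout A.str (α.app A.a), pushout.inl _ _, pushout.inr _ _⟩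
  | n + 1 =>
    let s := stage n
    ⟨s.tgt, pushout s.act (G.map s.inc), pushout.inl _ _, pushout.inr _ _⟩

noncomputable def obj (n : ℕ) : X := (stage α A n).src

noncomputable def inc (n : ℕ) : obj α A n ⟶ obj α A (n + 1) := (stage α A n).inc

noncomputable def act (n : ℕ) : G.obj (obj α A n) ⟶ obj α A (n + 1) := (stage α A n).act

lemma str_inc_zero : A.str ≫ inc α A 0 = α.app A.a ≫ act α A 0 :=
  pushout.condition

lemma act_inc_succ (n : ℕ) :
    act α A n ≫ inc α A (n + 1) = G.map (inc α A n) ≫ act α A (n + 1) :=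
  pushout.condition

lemma obj_succ_hom_ext (n : ℕ) {Z : X} {f f' : obj α A (n + 1) ⟶ Z}
    (hinc : inc α A n ≫ f = inc α A n ≫ f') (hact : act α A n ≫ f = act α A n ≫ f') :
    f = f' := by
  cases n <;> exact pushout.hom_ext hinc hact

section Lift

variable {B : Algebra G}

/-- At `n = 0` this says that `f` is a map of `F`-algebras `A ⟶ α* B`. -/
def IsCompatible : (n : ℕ) → (obj α A n ⟶ B.a) → Prop
  | 0, f => A.str ≫ f = α.app A.a ≫ G.map f ≫ B.str
  | n + 1, f => act α A n ≫ f = G.map (inc α A n ≫ f) ≫ B.str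

noncomputable def extend : (n : ℕ) → (f : obj α A n ⟶ B.a) → IsCompatible α A n f →
    (obj α A (n + 1) ⟶ B.a)
  | 0, f, hf => pushout.desc f (G.map f ≫ B.str) hf
  | n + 1, f, hf => pushout.desc f (G.map f ≫ B.str)
      (show act α A n ≫ f = G.map (inc α A n) ≫ G.map f ≫ B.str by
        rw [hf, G.map_comp, Category.assoc])

lemma inc_extend (n : ℕ) (f : obj α A n ⟶ B.a) (hf : IsCompatible α A n f) :
    inc α A n ≫ extend α A n f hf = f := by
  cases n <;> exact pushout.inl_desc _ _ _

lemma act_extend (n : ℕ) (f : obj α A n ⟶ B.a) (hf : IsCompatible α A n f) :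
    act α A n ≫ extend α A n f hf = G.map f ≫ B.str := by
  cases n <;> exact pushout.inr_desc _ _ _

lemma isCompatible_extend (n : ℕ) (f : obj α A n ⟶ B.a) (hf : IsCompatible α A n f) :
    IsCompatible α A (n + 1) (extend α A n f hf) := by
  show act α A n ≫ _ = G.map (inc α A n ≫ _) ≫ B.str
  rw [act_extend, inc_extend]

lemma isCompatible_zero (g : A ⟶ (Algebra.functorOfNatTrans α).obj B) :
    IsCompatible α A 0 g.f :=
  (g.h.symm.trans (α.naturality_assoc g.f B.str) :)

variable {A} (g : A ⟶ (Algebra.functorOfNatTrans α).obj B)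

noncomputable def liftAux : (n : ℕ) → { f : obj α A n ⟶ B.a // IsCompatible α A n f }
  | 0 => ⟨g.f, isCompatible_zero α A g⟩
  | n + 1 => ⟨extend α A n _ (liftAux n).2, isCompatible_extend α A n _ (liftAux n).2⟩

noncomputable def liftObj (n : ℕ) : obj α A n ⟶ B.a := (liftAux α g n).1

lemma inc_liftObj (n : ℕ) : inc α A n ≫ liftObj α g (n + 1) = liftObj α g n :=
  inc_extend α A n _ _

lemma act_liftObj (n : ℕ) :
    act α A n ≫ liftObj α g (n + 1) = G.map (liftObj α g n) ≫ B.str :=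
  act_extend α A n _ _

end Lift

noncomputable def chain : ℕ ⥤ X := Functor.ofSequence (inc α A)

variable [HasColimitsOfShape ℕ X]

noncomputable def ι (n : ℕ) : obj α A n ⟶ colimit (chain α A) := colimit.ι (chain α A) n

lemma inc_ι (n : ℕ) : inc α A n ≫ ι α A (n + 1) = ι α A n := by
  have h := colimit.w (chain α A) (homOfLE (Nat.le_add_right n 1))
  rw [chain, Functor.ofSequence_map_homOfLE_succ] at h
  exact h

lemma map_inc_act_ι (n : ℕ) :
    G.map (inc α A n) ≫ act α A (n + 1) ≫ ι α A (n + 2) = act α A n ≫ ι α A (n + 1) := by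
  rw [← inc_ι α A (n + 1), ← Category.assoc, ← act_inc_succ, Category.assoc]

lemma str_ι_zero : A.str ≫ ι α A 0 = α.app A.a ≫ act α A 0 ≫ ι α A 1 := by
  rw [← inc_ι α A 0]
  -- `obj α A 0` is `A.a` only after unfolding `stage`, so `rw` cannot reassociate here.
  exact (Category.assoc _ _ _).symm.trans
    ((str_inc_zero α A =≫ ι α A 1).trans (Category.assoc _ _ _))

noncomputable def actCocone : Cocone (chain α A ⋙ G) where
  pt := colimit (chain α A)
  ι := NatTrans.ofSequence (fun n => act α A n ≫ ι α A (n + 1)) fun n => by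
    simp only [chain, Functor.comp_map, Functor.ofSequence_map_homOfLE_succ,
      Functor.const_obj_map]
    exact (map_inc_act_ι α A n).trans (Category.comp_id _).symm

section Lift

variable {A} {B : Algebra G} (g : A ⟶ (Algebra.functorOfNatTrans α).obj B)

noncomputable def liftCocone : Cocone (chain α A) where
  pt := B.a
  ι := NatTrans.ofSequence (liftObj α g) fun n => by
    simp only [chain, Functor.ofSequence_map_homOfLE_succ, Functor.const_obj_map]
    exact (inc_liftObj α g n).trans (Category.comp_id _).symm

noncomputable def liftHom : colimit (chain α A) ⟶ B.a := colimit.desc (chain α A) (liftCocone α g)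

lemma ι_liftHom (n : ℕ) : ι α A n ≫ liftHom α g = liftObj α g n :=
  colimit.ι_desc (liftCocone α g) n

end Lift

variable [PreservesColimitsOfShape ℕ G]

noncomputable def str : G.obj (colimit (chain α A)) ⟶ colimit (chain α A) :=
  (isColimitOfPreserves G (colimit.isColimit (chain α A))).desc (actCocone α A)

lemma map_ι_str (n : ℕ) : G.map (ι α A n) ≫ str α A = act α A n ≫ ι α A (n + 1) :=
  (isColimitOfPreserves G (colimit.isColimit (chain α A))).fac (actCocone α A) n

lemma map_colimit_hom_ext {Z : X} {f f' : G.obj (colimit (chain α A)) ⟶ Z}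
    (h : ∀ n, G.map (ι α A n) ≫ f = G.map (ι α A n) ≫ f') : f = f' :=
  (isColimitOfPreserves G (colimit.isColimit (chain α A))).hom_ext h

noncomputable abbrev free : Algebra G := ⟨colimit (chain α A), str α A⟩

noncomputable def unit : A ⟶ (Algebra.functorOfNatTrans α).obj (free α A) where
  f := ι α A 0
  h := by
    show F.map (ι α A 0) ≫ α.app _ ≫ str α A = A.str ≫ ι α A 0
    rw [α.naturality_assoc, map_ι_str]
    exact (str_ι_zero α A).symm

variable {A} {B : Algebra G}

lemma act_ι_comp_hom (k : free α A ⟶ B) (n : ℕ) :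
    act α A n ≫ ι α A (n + 1) ≫ k.f = G.map (ι α A n ≫ k.f) ≫ B.str := by
  rw [← Category.assoc, ← map_ι_str, Category.assoc, G.map_comp, Category.assoc, k.h]

lemma free_hom_ext {k k' : free α A ⟶ B} (w : ι α A 0 ≫ k.f = ι α A 0 ≫ k'.f) : k = k' := by
  have h : ∀ n, ι α A n ≫ k.f = ι α A n ≫ k'.f := by
    intro n
    induction n with
    | zero => exact w
    | succ n ih =>
      apply obj_succ_hom_ext
      · rw [← Category.assoc, inc_ι, ih, ← Category.assoc, inc_ι]
      · rw [act_ι_comp_hom, act_ι_comp_hom, ih]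
  exact Algebra.Hom.ext (colimit.hom_ext h)

variable (g : A ⟶ (Algebra.functorOfNatTrans α).obj B)

lemma map_liftHom_str : G.map (liftHom α g) ≫ B.str = str α A ≫ liftHom α g :=
  map_colimit_hom_ext α A fun n => by
    rw [← Category.assoc, ← G.map_comp, ι_liftHom, ← Category.assoc, map_ι_str,
      Category.assoc, ι_liftHom, act_liftObj]

noncomputable def lift : free α A ⟶ B := ⟨liftHom α g, map_liftHom_str α g⟩

lemma unit_comp_lift : unit α A ≫ (Algebra.functorOfNatTrans α).map (lift α g) = g :=
  Algebra.Hom.ext (ι_liftHom α g 0)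

variable (A) in
noncomputable def isInitialUnit : IsInitial (StructuredArrow.mk (unit α A)) :=
  IsInitial.ofUniqueHom (fun B => StructuredArrow.homMk (lift α B.hom) (unit_comp_lift α B.hom))
    fun B m => StructuredArrow.hom_ext _ _ <| free_hom_ext α <|
      congrArg Algebra.Hom.f ((StructuredArrow.w m).trans (unit_comp_lift α B.hom).symm)

end CategoryTheory.Endofunctor.FreeAlgebra

/-- Let `X` be a category with pushouts and colimits of `ℕ`-indexed chains,
let `F, G : X ⥤ X` be endofunctors such that `G` preserves colimits of `ℕ`-indexed chains,
and let `α : F ⟶ G` be a natural transformation.  Then the restriction functor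
`α* : Alg(G) ⥤ Alg(F)` admits a left adjoint. -/
theorem endofunctor_restriction_has_left_adjoint
    {X : Type u₁} [Category.{v₁} X]
    [HasPushouts X] [HasColimitsOfShape ℕ X]
    (F G : X ⥤ X) [PreservesColimitsOfShape ℕ G] (α : F ⟶ G) :
    ∃ L : Algebra F ⥤ Algebra G,
      Nonempty (L ⊣ Algebra.functorOfNatTrans α) :=
  have := fun A => (FreeAlgebra.isInitialUnit α A).hasInitial
  ⟨_, ⟨adjunctionOfStructuredArrowInitials _⟩⟩
end

section
/- Let r : Grp ⥤ Grp⋉Grp be the functor sending a group G to (G, G, conj), where conj : G →* MulAut G is the conjugation action conj(g)(h) = g h g⁻¹, and sending a group homomorphism φ : G →* G' to the pair (φ, φ). Then r is a well-defined functor and admits a left adjoint sending (G, H, ψ) to the semidirect product H ⋊[ψ] G; equivalently, there is a bijection, natural in (G, H, ψ) and in G', between morphisms (G, H, ψ) → (G', G', conj) in Grp⋉Grp and group homomorphisms H ⋊[ψ] G →* G'. -/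
open CategoryTheory

universe u

/-- An object of the category `Grp ⋉ Grp`: a pair of groups `G`, `H` together with an
action `ψ : G →* MulAut H` of `G` on `H` by automorphisms. -/
structure GrpAct : Type (u + 1) where
  G : Type u
  [grpG : Group G]
  H : Type u
  [grpH : Group H]
  ψ : G →* MulAut H

attribute [instance] GrpAct.grpG GrpAct.grpH

/-- A morphism `(G, H, ψ) ⟶ (G', H', ψ')` in `Grp ⋉ Grp`: a pair of group homomorphisms
`(u, f)` such that `f (ψ g h) = ψ' (u g) (f h)` for all `g`, `h`. -/
@[ext]
structure GrpActHom (P Q : GrpAct.{u}) where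
  u : P.G →* Q.G
  f : P.H →* Q.H
  comm : ∀ (g : P.G) (h : P.H), f (P.ψ g h) = Q.ψ (u g) (f h)

instance : CategoryStruct (GrpAct.{u}) where
  Hom := GrpActHom
  id P := { u := MonoidHom.id _, f := MonoidHom.id _, comm := fun _ _ => rfl }
  comp {P Q R} α β :=
    { u := β.u.comp α.u
      f := β.f.comp α.f
      comm := fun g h => by
        simp only [MonoidHom.comp_apply, α.comm, β.comm] }

@[ext]
lemma GrpAct.hom_ext {P Q : GrpAct.{u}} (α β : P ⟶ Q)
    (h1 : α.u = β.u) (h2 : α.f = β.f) : α = β :=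
  GrpActHom.ext h1 h2

instance : Category (GrpAct.{u}) where
  id_comp f := by ext <;> rfl
  comp_id f := by ext <;> rfl
  assoc f g h := by ext <;> rfl

/-- The conjugation functor `r : Grp ⥤ Grp ⋉ Grp`, sending a group `G` to
`(G, G, conj)` where `conj : G →* MulAut G` is the conjugation action, and a group
homomorphism `φ` to the pair `(φ, φ)`. -/
def conjFunctor : GrpCat.{u} ⥤ GrpAct.{u} where
  obj G := { G := G, H := G, ψ := MulAut.conj }
  map {G G'} φ :=
    { u := φ.hom
      f := φ.hom
      comm := fun g h => by
        simp [MulAut.conj_apply, map_mul, map_inv] }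
  map_id G := by
    ext <;> rfl
  map_comp φ ψ := by
    ext <;> rfl

/-! A homomorphism `H ⋊[ψ] G →* G'` is the same as a pair of homomorphisms `f : H →* G'`,
`u : G →* G'` with `f (ψ g h) = u g * f h * (u g)⁻¹`, i.e. a morphism
`(G, H, ψ) ⟶ (G', G', conj)`.
This bijection is natural in `G'`, since both sides are post-composition, and a bijection natural
in the target already determines a left adjoint with the prescribed object part. -/

open SemidirectProduct

namespace GrpAct

theorem f_comp_ψ_eq_conj_comp_f {P : GrpAct.{u}} {G' : GrpCat.{u}} (α : P ⟶ conjFunctor.obj G')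
    (g : P.G) : α.f.comp (P.ψ g).toMonoidHom = (MulAut.conj (α.u g)).toMonoidHom.comp α.f :=
  MonoidHom.ext (α.comm g)

def semidirectProductHomEquiv (P : GrpAct.{u}) (G' : GrpCat.{u}) :
    (GrpCat.of (P.H ⋊[P.ψ] P.G) ⟶ G') ≃ (P ⟶ conjFunctor.obj G') where
  toFun F :=
    { u := F.hom.comp inr
      f := F.hom.comp inl
      comm := fun g h => by
        change F.hom (inl (P.ψ g h)) = F.hom (inr g) * F.hom (inl h) * (F.hom (inr g))⁻¹
        simp only [inl_aut, map_mul, map_inv] }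
  invFun α := GrpCat.ofHom (lift α.f α.u (f_comp_ψ_eq_conj_comp_f α))
  left_inv F := GrpCat.hom_ext (lift_unique F.hom).symm
  right_inv α := hom_ext _ _
    (lift_comp_inr _ _ (f_comp_ψ_eq_conj_comp_f α))
    (lift_comp_inl _ _ (f_comp_ψ_eq_conj_comp_f α))

theorem semidirectProductHomEquiv_comp (P : GrpAct.{u}) (G' G'' : GrpCat.{u})
    (φ : G' ⟶ G'') (F : GrpCat.of (P.H ⋊[P.ψ] P.G) ⟶ G') :
    semidirectProductHomEquiv P G'' (F ≫ φ) =
      semidirectProductHomEquiv P G' F ≫ conjFunctor.map φ :=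
  hom_ext _ _ rfl rfl

end GrpAct

/-- The conjugation functor `r : Grp ⥤ Grp ⋉ Grp` is a well-defined
functor and admits a left adjoint sending `(G, H, ψ)` to the semidirect product
`H ⋊[ψ] G`; equivalently, there is a bijection, natural in `(G, H, ψ)` and in `G'`,
between morphisms `(G, H, ψ) ⟶ (G', G', conj)` in `Grp ⋉ Grp` and group homomorphisms
`H ⋊[ψ] G →* G'`. -/
theorem conjFunctor_has_left_adjoint_semidirectProduct :
    ∃ L : GrpAct.{u} ⥤ GrpCat.{u}, Nonempty (L ⊣ conjFunctor.{u}) ∧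
      ∀ P : GrpAct.{u}, Nonempty (L.obj P ≅ GrpCat.of (P.H ⋊[P.ψ] P.G)) := by
  exact ⟨Adjunction.leftAdjointOfEquiv _ GrpAct.semidirectProductHomEquiv_comp,
    ⟨Adjunction.adjunctionOfEquivLeft _ _⟩, fun _ => ⟨Iso.refl _⟩⟩
end

section
/- Let A, X be categories and T : A ⥤ Monad X a parametrized monad. Define T̂ : A × X ⥤ A × X on objects by (A, X) ↦ (A, T_A(X)) and on morphisms (f : A → B, g : X → Y) by (f, (T_f)_Y ∘ T_A(g)). Then T̂ carries a monad structure whose unit has components (𝟙_A, η^{T_A}_X) and whose multiplication has components (𝟙_A, μ^{T_A}_X); moreover the composite of T̂ with the first projection A × X ⥤ A equals the first projection, and the images under the first projection of the unit and the multiplication of T̂ are identity natural transformations. Conversely, every monad M on A × X satisfying these three conditions equals T̂ for a unique functor T : A ⥤ Monad X. -/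
/-!
Write `S := M ⋙ snd`. Since `M ⋙ fst = fst`, the monad `M` may be copied onto the functor
`p ↦ (p.1, S p)`; after that, the unit and multiplication of `M` at `(a, x)` have second
components `x ⟶ S (a, x)` and `S (a, S (a, x)) ⟶ S (a, x)`, which are the unit and
multiplication of the fibre `T_a := S (a, -)`. As `η` and `μ` have identity first components,
the monad laws of `M` project to those of `T_a`, and `S (f, 𝟙)` gives monad morphisms
`T_a ⟶ T_b`. The resulting `T` satisfies `T̂ = M`, and starting from `M = T̂` it gives back `T`,
which is uniqueness.
-/

open CategoryTheory CategoryTheory.Limits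

universe v₁ v₂ u₁ u₂

variable {A : Type u₁} [Category.{v₁} A] {X : Type u₂} [Category.{v₂} X]

/-- The endofunctor `T̂ : A × X ⥤ A × X`, `(A, X) ↦ (A, T_A(X))`, induced by a
parametrized monad `T : A ⥤ Monad X`. -/
def hatFunctor (T : A ⥤ Monad X) : A × X ⥤ A × X where
  obj p := (p.1, (T.obj p.1).obj p.2)
  map {p q} f := (f.1, (T.obj p.1).map f.2 ≫ (T.map f.1).app q.2)
  map_id p := by
    ext
    · rfl
    · simp [MonadHom.id_toNatTrans]
  map_comp {p q r} f g := by
    ext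
    · rfl
    · dsimp
      simp only [Functor.map_comp, Category.assoc, MonadHom.comp_toNatTrans,
        NatTrans.comp_app]
      rw [← NatTrans.naturality_assoc (T.map f.1).toNatTrans g.2]

/-- The monad `T̂` on `A × X` induced by a parametrized monad `T : A ⥤ Monad X`:
on objects `(A, X) ↦ (A, T_A(X))`, with unit components `(𝟙_A, η^{T_A}_X)` and
multiplication components `(𝟙_A, μ^{T_A}_X)`. -/
def hatMonad (T : A ⥤ Monad X) : Monad (A × X) where
  toFunctor := hatFunctor T
  η :=
    { app := fun p => (𝟙 p.1, (T.obj p.1).η.app p.2)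
      naturality := by
        intro p q f
        ext
        · simp [hatFunctor]
        · dsimp [hatFunctor]
          rw [← NatTrans.naturality_assoc (T.obj p.1).η f.2 ((T.map f.1).app q.2)]
          simp }
  μ :=
    { app := fun p => (𝟙 p.1, (T.obj p.1).μ.app p.2)
      naturality := by
        intro p q f
        ext
        · simp [hatFunctor]
        · dsimp [hatFunctor]
          simp only [Functor.map_comp, Category.assoc]
          rw [← NatTrans.naturality_assoc (T.obj p.1).μ f.2 ((T.map f.1).app q.2),
            MonadHom.app_μ (T.map f.1) q.2]
          simp }
  assoc p := by
    ext
    · simp [hatFunctor]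
    · dsimp [hatFunctor]
      simp [Monad.assoc (T.obj p.1)]
  left_unit p := by
    ext
    · simp [hatFunctor]
    · dsimp [hatFunctor]
      simp
  right_unit p := by
    ext
    · simp [hatFunctor]
    · dsimp [hatFunctor]
      simp

open scoped CategoryTheory.Prod

namespace CategoryTheory

section MonadEq

variable {C : Type*} [Category C]

theorem Monad.ext_of_toFunctor_eq {M N : Monad C} (h : M.toFunctor = N.toFunctor)
    (hη : ∀ x, M.η.app x ≫ eqToHom (Functor.congr_obj h x) = N.η.app x)
    (hμ : ∀ x, eqToHom (Functor.congr_obj (congrArg₂ Functor.comp h h) x).symm ≫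
      M.μ.app x ≫ eqToHom (Functor.congr_obj h x) = N.μ.app x) :
    M = N := by
  cases M; cases N
  dsimp only at h hη hμ
  subst h
  simp only [eqToHom_refl, Category.comp_id, Category.id_comp] at hη hμ
  congr <;> ext <;> simp only [hη, hμ]

theorem Monad.eqToHom_app {M N : Monad C} (h : M = N) (x : C) :
    (eqToHom h).app x = eqToHom (Functor.congr_obj (congrArg Monad.toFunctor h) x) := by
  subst h; rfl

/-- Built with casts rather than `eqToHom`s, so that it is definitionally `M` whenever `e` relates
definitionally equal functors. -/
def Monad.copy (M : Monad C) (F : C ⥤ C) (e : M.toFunctor = F) : Monad C where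
  toFunctor := F
  η := e ▸ M.η
  μ := e ▸ M.μ
  assoc := by subst e; exact M.assoc
  left_unit := by subst e; exact M.left_unit
  right_unit := by subst e; exact M.right_unit

variable (M : Monad C) (F : C ⥤ C) (e : M.toFunctor = F)

theorem Monad.copy_eq : M.copy F e = M := by
  subst e; rfl

theorem Monad.copy_η_app (x : C) :
    (M.copy F e).η.app x = M.η.app x ≫ eqToHom (Functor.congr_obj e x) := by
  subst e; simp [Monad.copy]

theorem Monad.copy_μ_app (x : C) :
    (M.copy F e).μ.app x = eqToHom (Functor.congr_obj (congrArg₂ Functor.comp e e) x).symm ≫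
      M.μ.app x ≫ eqToHom (Functor.congr_obj e x) := by
  subst e; simp [Monad.copy]

end MonadEq

theorem Functor.eq_prod'_of_comp_fst_eq {C B D : Type*} [Category C] [Category B] [Category D]
    {F : C ⥤ B × D} {G : C ⥤ B} (h : F ⋙ Prod.fst B D = G) :
    F = G.prod' (F ⋙ Prod.snd B D) := by
  subst h; rfl

section Unhat

variable (M : Monad (A × X)) (h : M.toFunctor ⋙ Prod.fst A X = Prod.fst A X)

/-- `M` copied onto the functor `p ↦ (p.1, (M.obj p).2)`, on which the fibres of the unit and the
multiplication over a fixed `a : A` typecheck without any transport. -/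
def straighten : Monad (A × X) :=
  M.copy _ (Functor.eq_prod'_of_comp_fst_eq h)

theorem straighten_eq : straighten M h = M :=
  Monad.copy_eq _ _ _

variable {M h} in
theorem straighten_η_app
    (hη : ∀ p : A × X, (M.η.app p).1 = eqToHom (Functor.congr_obj h p).symm)
    (p : A × X) : (straighten M h).η.app p = 𝟙 p.1 ×ₘ ((straighten M h).η.app p).2 := by
  ext
  · simp [straighten, Monad.copy_η_app, hη]; rfl
  · rfl

variable {M h} in
theorem straighten_μ_app
    (hμ : ∀ p : A × X, (M.μ.app p).1 = eqToHom (Functor.congr_obj h (M.obj p)))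
    (p : A × X) : (straighten M h).μ.app p = 𝟙 p.1 ×ₘ ((straighten M h).μ.app p).2 := by
  ext
  · simp [straighten, Monad.copy_μ_app, hμ]; rfl
  · rfl

variable (hη : ∀ p : A × X, (M.η.app p).1 = eqToHom (Functor.congr_obj h p).symm)
  (hμ : ∀ p : A × X, (M.μ.app p).1 = eqToHom (Functor.congr_obj h (M.obj p)))

def fiberMonad (a : A) : Monad X where
  toFunctor := (Functor.curry.obj (M.toFunctor ⋙ Prod.snd A X)).obj a
  η :=
    { app x := ((straighten M h).η.app (a, x)).2
      naturality _ _ g := congrArg (·.2) ((straighten M h).η.naturality (𝟙 a ×ₘ g)) }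
  μ :=
    { app x := ((straighten M h).μ.app (a, x)).2
      naturality _ _ g := congrArg (·.2) ((straighten M h).μ.naturality (𝟙 a ×ₘ g)) }
  left_unit x := congrArg (·.2) ((straighten M h).left_unit (a, x))
  right_unit x := by
    have := congrArg (·.2) ((straighten M h).right_unit (a, x))
    rwa [straighten_η_app hη] at this
  assoc x := by
    have := congrArg (·.2) ((straighten M h).assoc (a, x))
    rwa [straighten_μ_app hμ] at this

def unhat : A ⥤ Monad X where
  obj := fiberMonad M h hη hμ
  map f :=
    { toNatTrans := (Functor.curry.obj (M.toFunctor ⋙ Prod.snd A X)).map f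
      app_η x :=
        (congrArg (·.2) ((straighten M h).η.naturality (f ×ₘ 𝟙 x))).symm.trans
          (Category.id_comp _)
      app_μ x := by
        simp only [fiberMonad, Functor.curry_obj_obj_map, Functor.curry_obj_map_app,
          ← Functor.map_comp, prod_comp, Category.id_comp, Category.comp_id]
        exact (congrArg (·.2) ((straighten M h).μ.naturality (f ×ₘ 𝟙 x))).symm }
  map_id a := MonadHom.ext (congrArg NatTrans.app
    ((Functor.curry.obj (M.toFunctor ⋙ Prod.snd A X)).map_id a))
  map_comp f g := MonadHom.ext (congrArg NatTrans.app
    ((Functor.curry.obj (M.toFunctor ⋙ Prod.snd A X)).map_comp f g))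

theorem hatMonad_unhat_toFunctor :
    (hatMonad (unhat M h hη hμ)).toFunctor = (straighten M h).toFunctor :=
  Functor.hext (fun _ => rfl) fun _ _ f => by
    conv_rhs => rw [Prod.fac f, Functor.map_comp]
    exact heq_of_eq (Prod.hom_ext (Category.id_comp f.1).symm rfl)

/- In this proof and the two below, the objects on both sides agree definitionally, so the
`eqToHom`s reduce to identities. -/
theorem hatMonad_unhat : hatMonad (unhat M h hη hμ) = M :=
  calc hatMonad (unhat M h hη hμ)
    _ = straighten M h := Monad.ext_of_toFunctor_eq (hatMonad_unhat_toFunctor M h hη hμ)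
          (fun p => (Category.comp_id _).trans (straighten_η_app hη p).symm)
          (fun p => ((Category.id_comp _).trans (Category.comp_id _)).trans
            (straighten_μ_app hμ p).symm)
    _ = M := straighten_eq M h

end Unhat

section UnhatHat

variable (T : A ⥤ Monad X) (h : (hatMonad T).toFunctor ⋙ Prod.fst A X = Prod.fst A X)
  (hη : ∀ p : A × X, ((hatMonad T).η.app p).1 = eqToHom (Functor.congr_obj h p).symm)
  (hμ : ∀ p : A × X,
    ((hatMonad T).μ.app p).1 = eqToHom (Functor.congr_obj h ((hatMonad T).obj p)))

theorem unhat_hatMonad_obj (a : A) : (unhat (hatMonad T) h hη hμ).obj a = T.obj a :=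
  Monad.ext_of_toFunctor_eq
    (Functor.hext (fun _ => rfl) fun _ _ g => heq_of_eq <| by
      simp [unhat, fiberMonad, hatMonad, hatFunctor])
    (fun _ => Category.comp_id _)
    (fun _ => (Category.id_comp _).trans (Category.comp_id _))

theorem unhat_hatMonad : unhat (hatMonad T) h hη hμ = T :=
  Functor.ext (unhat_hatMonad_obj T h hη hμ) fun a b f => by
    ext x
    simp only [MonadHom.comp_toNatTrans, NatTrans.comp_app, Monad.eqToHom_app]
    show (T.obj a).map (𝟙 x) ≫ (T.map f).app x = _
    simp only [Functor.map_id, Category.id_comp]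
    exact ((Category.id_comp _).trans (Category.comp_id _)).symm

end UnhatHat

end CategoryTheory

/-- For a parametrized monad `T : A ⥤ Monad X`, the functor
`T̂ : A × X ⥤ A × X`, `(A, X) ↦ (A, T_A(X))`, carries a monad structure whose unit has
components `(𝟙_A, η^{T_A}_X)` and whose multiplication has components `(𝟙_A, μ^{T_A}_X)`;
the composite of `T̂` with the first projection equals the first projection, and the unit
and multiplication of `T̂` project to identities.  Conversely, every monad `M` on `A × X`
satisfying these conditions equals `T̂` for a unique functor `T : A ⥤ Monad X`. -/
theorem hatMonad_spec_and_unique :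
    (∀ (T : A ⥤ Monad X),
      (∀ (a : A) (x : X),
          (hatMonad T).η.app (a, x) = (𝟙 a, (T.obj a).η.app x)) ∧
      (∀ (a : A) (x : X),
          (hatMonad T).μ.app (a, x) = (𝟙 a, (T.obj a).μ.app x)) ∧
      ((hatMonad T).toFunctor ⋙ CategoryTheory.Prod.fst A X = CategoryTheory.Prod.fst A X) ∧
      (∀ p : A × X, ((hatMonad T).η.app p).1 = 𝟙 p.1) ∧
      (∀ p : A × X, ((hatMonad T).μ.app p).1 = 𝟙 p.1)) ∧
    (∀ (M : Monad (A × X))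
      (h : M.toFunctor ⋙ CategoryTheory.Prod.fst A X = CategoryTheory.Prod.fst A X),
      (∀ p : A × X, (M.η.app p).1 = eqToHom (Functor.congr_obj h p).symm) →
      (∀ p : A × X, (M.μ.app p).1 = eqToHom (Functor.congr_obj h (M.obj p))) →
      ∃! T : A ⥤ Monad X, M = hatMonad T) := by
  refine ⟨fun T => ⟨fun _ _ => rfl, fun _ _ => rfl, rfl, fun _ => rfl, fun _ => rfl⟩, ?_⟩
  intro M h hη hμ
  refine ⟨unhat M h hη hμ, (hatMonad_unhat M h hη hμ).symm, ?_⟩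
  rintro T rfl
  exact (unhat_hatMonad T h hη hμ).symm
end
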